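/- The NAP operad satisfies the additional commutation property: for any rooted tree t with a vertex s, and rooted trees u, v, one has (t ∘_s u) ∘_{root(u)} v = φ_{uv}((t ∘_s v) ∘_{root(v)} u), where φ_{uv} is the relabelling that exchanges the role of root(u) and root(v). -/

import Mathlib

/-!
Composing at the root of `u` after grafting `u` at `s` is the same as grafting at `s` the tree
`u ∘_{root u} v`, in which the roots of `u` and `v` are merged into a single vertex named
`root v`. Hence both sides are `t ∘ₛ` of a root merge of `u` and `v`; the two merges differ only
in the name of the merged vertex, which `φ_uv` corrects, and `φ_uv` fixes every vertex of `t`.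
-/

/-- A labelled rooted tree with vertex set `supp` inside an ambient label type `V`,
given by its root and its parent function (normalized to the identity outside
`supp`, and fixing the root). -/
structure LTree (V : Type) where
  supp : Finset V
  root : V
  parent : V → V

namespace LTree

variable {V : Type} [DecidableEq V]

/-- `t` is an honest rooted tree on its vertex set `t.supp`:  the root is a vertex,
the parent map fixes the root, sends vertices to vertices, every vertex reaches the
root by iterating the parent map (connectedness/acyclicity), and the parent map is
normalized to the identity outside the vertex set. -/
def IsTree (t : LTree V) : Prop :=
  t.root ∈ t.supp ∧ t.parent t.root = t.root ∧
    (∀ v ∈ t.supp, t.parent v ∈ t.supp ∧ ∃ n, t.parent^[n] v = t.root) ∧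
    (∀ v, v ∉ t.supp → t.parent v = v)

/-- The NAP partial composition `u ∘ₛ v`: replace the vertex `s` of `u` by the tree
`v`, reconnecting each edge of `u` arriving at `s` to the root of `v`. -/
def ncomp (u : LTree V) (s : V) (v : LTree V) : LTree V where
  supp := u.supp.erase s ∪ v.supp
  root := if u.root = s then v.root else u.root
  parent x :=
    if x ∈ u.supp.erase s then (if u.parent x = s then v.root else u.parent x)
    else if x ∈ v.supp then
      (if x = v.root then (if u.parent s = s then v.root else u.parent s) else v.parent x)
    else x

/-- Relabelling a tree along a bijection of the ambient label type. -/
def relabel (e : V ≃ V) (t : LTree V) : LTree V where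
  supp := t.supp.image e
  root := e t.root
  parent x := e (t.parent (e.symm x))

/-- The single-vertex tree on the vertex `a`. -/
def eta (a : V) : LTree V := ⟨{a}, a, fun x => x⟩

/-- The edges of `u` arriving at `s`, identified with the children of `s`. -/
def children (u : LTree V) (s : V) : Finset V :=
  (u.supp.erase s).filter (fun w => u.parent w = s)

/-- The tree `u ∘ₛᶠ v` for `f : In(s,u) → Ver(v)`: replace the vertex `s` of `u` by
the tree `v`, reconnecting each edge `a ∈ In(s,u)` to the vertex `f a` of `v`. -/
def fcomp (u : LTree V) (s : V) (v : LTree V) (f : V → V) : LTree V where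
  supp := u.supp.erase s ∪ v.supp
  root := if u.root = s then v.root else u.root
  parent x :=
    if x ∈ u.supp.erase s then (if u.parent x = s then f x else u.parent x)
    else if x ∈ v.supp then
      (if x = v.root then (if u.parent s = s then v.root else u.parent s) else v.parent x)
    else x

/-- The Pre-Lie partial composition `u ∘ₛ v := Σ_{f : In(s,u) → Ver(v)} u ∘ₛᶠ v`,
a formal linear combination of rooted trees. -/
noncomputable def plcomp (u : LTree V) (s : V) (v : LTree V) : LTree V →₀ ℚ :=
  ∑ f : {w // w ∈ children u s} → {x // x ∈ v.supp},
    Finsupp.single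
      (fcomp u s v (fun w => if h : w ∈ children u s then (f ⟨w, h⟩ : V) else v.root)) 1

/-- Bilinear extension of the Pre-Lie partial composition to formal sums. -/
noncomputable def plext (x : LTree V →₀ ℚ) (s : V) (y : LTree V →₀ ℚ) : LTree V →₀ ℚ :=
  x.sum fun t a => y.sum fun u b => (a * b) • plcomp t s u

end LTree

namespace LTree

section

variable {V : Type}

@[ext]
theorem ext {a b : LTree V} (hsupp : a.supp = b.supp) (hroot : a.root = b.root)
    (hparent : a.parent = b.parent) : a = b := by
  cases a; cases b; cases hsupp; cases hroot; cases hparent; rfl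

variable {t : LTree V} (ht : t.IsTree)
include ht

theorem IsTree.root_mem : t.root ∈ t.supp := ht.1

theorem IsTree.parent_root : t.parent t.root = t.root := ht.2.1

theorem IsTree.parent_mem {x : V} (hx : x ∈ t.supp) : t.parent x ∈ t.supp :=
  (ht.2.2.1 x hx).1

theorem IsTree.parent_of_notMem {x : V} (hx : x ∉ t.supp) : t.parent x = x :=
  ht.2.2.2 x hx

end

variable {V : Type} [DecidableEq V]

theorem ncomp_ncomp_root_assoc {t u : LTree V} (v : LTree V) {s : V} (ht : t.IsTree)
    (hs : s ∈ t.supp) (hu : u.IsTree) (hv : v.IsTree) (htu : Disjoint t.supp u.supp)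
    (huv : Disjoint u.supp v.supp) :
    ncomp (ncomp t s u) u.root v = ncomp t s (ncomp u u.root v) := by
  have hrt : u.root ∉ t.supp := Finset.disjoint_right.mp htu hu.root_mem
  have hne : ∀ {x}, x ∈ t.supp → x ≠ u.root := fun hx h => hrt (h ▸ hx)
  have hrv : u.root ∉ v.supp := Finset.disjoint_left.mp huv hu.root_mem
  ext1
  · ext x
    simp only [ncomp, Finset.mem_union, Finset.mem_erase]
    rcases eq_or_ne x u.root with rfl | hxu
    · simp [hrt, hrv]
    · simp [hxu, or_assoc]
  · by_cases h : t.root = s <;> simp [ncomp, h, hne ht.root_mem]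
  · funext x
    simp only [ncomp, Finset.mem_union, Finset.mem_erase]
    by_cases hxt : x ≠ s ∧ x ∈ t.supp
    · have hxu : x ∉ u.supp := Finset.disjoint_left.mp htu hxt.2
      simp [hxt, hxu, hne hxt.2, hne (ht.parent_mem hxt.2)]
      split_ifs <;> rfl
    by_cases hxu : x ≠ u.root ∧ x ∈ u.supp
    · have hxv : x ∉ v.supp := Finset.disjoint_left.mp huv hxu.2
      have hxr : x ≠ v.root := fun h => hxv (h ▸ hv.root_mem)
      simp [hxt, hxu, hxv, hxr]
    simp [hxt, hxu, hu.root_mem, hrt, hne (ht.parent_mem hs)]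
    split_ifs <;> simp_all

theorem relabel_ncomp (e : V ≃ V) (a : LTree V) (s : V) (b : LTree V) :
    relabel e (ncomp a s b) = ncomp (relabel e a) (e s) (relabel e b) := by
  ext1
  · simp only [relabel, ncomp, Finset.image_union, Finset.image_erase e.injective]
  · simp only [relabel, ncomp, e.apply_eq_iff_eq, apply_ite e]
  · funext x
    obtain ⟨y, rfl⟩ := e.surjective x
    simp only [relabel, ncomp, e.symm_apply_apply, Finset.mem_erase, Finset.mem_image,
      e.injective.eq_iff, exists_eq_right, apply_ite e, ne_eq]

theorem relabel_eq_self {e : V ≃ V} {t : LTree V} (ht : t.IsTree)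
    (he : ∀ x ∈ t.supp, e x = x) : relabel e t = t := by
  ext1
  · rw [relabel, Finset.image_congr he, Finset.image_id']
  · exact he _ ht.root_mem
  · funext x
    by_cases hx : x ∈ t.supp
    · have hex : e.symm x = x := e.symm_apply_eq.mpr (he x hx).symm
      simp only [relabel, hex, he _ (ht.parent_mem hx)]
    · have hex : e.symm x ∉ t.supp := fun h => hx ((e.apply_symm_apply x ▸ he _ h) ▸ h)
      simp only [relabel, ht.parent_of_notMem hex, ht.parent_of_notMem hx, e.apply_symm_apply]

theorem relabel_swap_ncomp_root {u v : LTree V} (hu : u.IsTree) (hv : v.IsTree)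
    (huv : Disjoint u.supp v.supp) :
    relabel (Equiv.swap u.root v.root) (ncomp v v.root u) = ncomp u u.root v := by
  have hru : u.root ∉ v.supp := Finset.disjoint_left.mp huv hu.root_mem
  have hrv : v.root ∉ u.supp := Finset.disjoint_right.mp huv hv.root_mem
  have hne : u.root ≠ v.root := fun h => hru (h ▸ hv.root_mem)
  ext1
  · ext x
    simp only [relabel, ncomp, ← Equiv.coe_toEmbedding, ← Finset.map_eq_image,
      Finset.mem_map_equiv, Equiv.symm_swap, Finset.mem_union, Finset.mem_erase]
    rcases eq_or_ne x u.root with rfl | hxur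
    · simp [hv.root_mem, hrv, hru, hu.root_mem]
    rcases eq_or_ne x v.root with rfl | hxvr
    · simp [hu.root_mem, hne, hrv, hru, hv.root_mem]
    simp [Equiv.swap_apply_of_ne_of_ne hxur hxvr, hxur, hxvr]
    tauto
  · simp [relabel, ncomp]
  · funext x
    simp only [relabel, ncomp, Equiv.symm_swap]
    rcases eq_or_ne x u.root with rfl | hxur
    · simp [hu.root_mem, hru, hrv]
    rcases eq_or_ne x v.root with rfl | hxvr
    · simp [hu.root_mem, hv.parent_root, hu.parent_root, hru, hrv, hne]
    have hσx := Equiv.swap_apply_of_ne_of_ne hxur hxvr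
    by_cases hxu : x ∈ u.supp
    · have hxv : x ∉ v.supp := Finset.disjoint_left.mp huv hxu
      have hp : u.parent x ≠ v.root := fun h => hrv (h ▸ hu.parent_mem hxu)
      simp [hσx, hxu, hxv, hxur, Equiv.swap_apply_def, hp]
    by_cases hxv : x ∈ v.supp
    · have hp : v.parent x ≠ u.root := fun h => hru (h ▸ hv.parent_mem hxv)
      simp [hσx, hxu, hxv, hxvr, Equiv.swap_apply_def, hp]
      split_ifs with h <;> simp [h]
    simp [hσx, hxu, hxv]

end LTree

open LTree in
/-- The additional commutation property of the NAP operad: for a vertex `s` of `t`,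
`(t ∘ₛ u) ∘_{root u} v = φ_uv ((t ∘ₛ v) ∘_{root v} u)`, where `φ_uv` is the
relabelling bijection exchanging the root of `u` and the root of `v`. -/
theorem nap_commutation {V : Type} [DecidableEq V] (t u v : LTree V)
    (ht : t.IsTree) (hu : u.IsTree) (hv : v.IsTree)
    (htu : Disjoint t.supp u.supp) (htv : Disjoint t.supp v.supp)
    (huv : Disjoint u.supp v.supp)
    (s : V) (hs : s ∈ t.supp) :
    ncomp (ncomp t s u) u.root v =
      relabel (Equiv.swap u.root v.root) (ncomp (ncomp t s v) v.root u) := by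
  have hfix : ∀ x ∈ t.supp, Equiv.swap u.root v.root x = x := fun x hx =>
    Equiv.swap_apply_of_ne_of_ne (fun h => Finset.disjoint_left.mp htu hx (h ▸ hu.root_mem))
      (fun h => Finset.disjoint_left.mp htv hx (h ▸ hv.root_mem))
  rw [ncomp_ncomp_root_assoc v ht hs hu hv htu huv,
    ncomp_ncomp_root_assoc u ht hs hv hu htv huv.symm, relabel_ncomp, relabel_eq_self ht hfix, hfix s hs, relabel_swap_ncomp_root hu hv huv]
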